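/- arXiv:1507.04699 — 6 statements merged into one kernel-verified Lean document; each statement's English description precedes it below -/
import Mathlib

section
/- Every finite induction model (A, 0, S) in which S is injective is isomorphic to (ZMod n, 0, x ↦ x+1) for some n ≥ 1, i.e., is a cycle: there exists n ≥ 1 and a bijection φ : ZMod n → A with φ(0) = 0_A and φ(x+1) = S(φ(x)). -/
theorem finite_injective_induction_model_is_cycle {A : Type*} [Finite A]
    (z : A) (S : A → A)
    (hind : ∀ G : Set A, z ∈ G → (∀ y ∈ G, S y ∈ G) → G = Set.univ)
    (hinj : Function.Injective S) :
    ∃ n : ℕ, 1 ≤ n ∧ ∃ φ : ZMod n → A, Function.Bijective φ ∧ φ 0 = z ∧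
      ∀ x : ZMod n, φ (x + 1) = S (φ x) := by
  -- every element is an iterate of z
  have hsurj : ∀ a : A, ∃ k : ℕ, S^[k] z = a := by
    have := hind (Set.range (fun k : ℕ => S^[k] z)) ⟨0, rfl⟩ ?_
    · intro a
      have : a ∈ Set.range (fun k : ℕ => S^[k] z) := this ▸ Set.mem_univ a
      exact this
    · rintro y ⟨k, rfl⟩
      exact ⟨k + 1, by show S^[k+1] z = S (S^[k] z); rw [Function.iterate_succ_apply']⟩
  -- cancellation
  have hcancel : ∀ i j : ℕ, i ≤ j → S^[i] z = S^[j] z → S^[j - i] z = z := by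
    intro i j hij h
    apply hinj.iterate i
    rw [← Function.iterate_add_apply, Nat.add_sub_cancel' hij, ← h]
  -- there is a positive period
  have hex : ∃ m : ℕ, 0 < m ∧ S^[m] z = z := by
    obtain ⟨i, j, hne, h⟩ := Finite.exists_ne_map_eq_of_infinite (fun k : ℕ => S^[k] z)
    rcases lt_or_gt_of_ne hne with hlt | hlt
    · exact ⟨j - i, Nat.sub_pos_of_lt hlt, hcancel i j hlt.le h⟩
    · exact ⟨i - j, Nat.sub_pos_of_lt hlt, hcancel j i hlt.le h.symm⟩
  classical
  set n := Nat.find hex with hn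
  obtain ⟨hnpos, hper⟩ : 0 < n ∧ S^[n] z = z := Nat.find_spec hex
  have hmin : ∀ m, 0 < m → m < n → S^[m] z ≠ z := by
    intro m hm hmn
    have := Nat.find_min hex hmn
    tauto
  haveI : NeZero n := ⟨hnpos.ne'⟩
  -- periodicity
  have hmod : ∀ k : ℕ, S^[k] z = S^[k % n] z := by
    intro k
    induction k using Nat.strong_induction_on with
    | _ k ih =>
      rcases lt_or_ge k n with h | h
      · rw [Nat.mod_eq_of_lt h]
      · have : k % n = (k - n) % n := (Nat.mod_eq_sub_mod h).symm ▸ rfl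
        rw [Nat.mod_eq_sub_mod h, ← ih (k - n) (by omega)]
        have : S^[k] z = S^[k - n] (S^[n] z) := by
          rw [← Function.iterate_add_apply]
          congr 1
          omega
        rw [this, hper]
  refine ⟨n, hnpos, fun x => S^[x.val] z, ⟨?_, ?_⟩, by simp, ?_⟩
  · -- injective
    have key : ∀ a b : ZMod n, a.val ≤ b.val → S^[a.val] z = S^[b.val] z → a = b := by
      intro a b hle hab
      have h := hcancel _ _ hle hab
      have hlt : b.val - a.val < n := lt_of_le_of_lt (Nat.sub_le _ _) (ZMod.val_lt b)
      by_contra hne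
      have hpos : 0 < b.val - a.val := by
        have : a.val ≠ b.val := fun h' => hne (ZMod.val_injective n h')
        omega
      exact hmin _ hpos hlt h
    intro a b hab
    rcases le_total a.val b.val with hle | hle
    · exact key a b hle hab
    · exact (key b a hle hab.symm).symm
  · -- surjective
    intro a
    obtain ⟨k, hk⟩ := hsurj a
    refine ⟨(k : ZMod n), ?_⟩
    show S^[(k : ZMod n).val] z = a
    rw [ZMod.val_natCast, ← hmod, hk]
  · -- step
    intro x
    have h1 : ((x.val + 1 : ℕ) : ZMod n) = x + 1 := by
      push_cast
      rw [ZMod.natCast_val, ZMod.cast_id]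
    show S^[(x + 1 : ZMod n).val] z = S (S^[x.val] z)
    rw [← h1, ZMod.val_natCast, ← hmod, Function.iterate_succ_apply']
end

section
/- Every induction model (A, 0, S) is either infinite and isomorphic to (ℕ, 0, succ), or finite; in the finite case the elements can be enumerated as 0, S(0), S²(0), …, S^{m-1}(0), all distinct, with S^m(0) = S^j(0) for some j < m (a 'spoon': a handle followed by a cycle, the pure cycle case being j = 0). -/
theorem induction_model_nat_or_spoon {A : Type*} (z : A) (S : A → A)
    (hind : ∀ G : Set A, z ∈ G → (∀ y ∈ G, S y ∈ G) → G = Set.univ) :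
    (Infinite A ∧ ∃ φ : ℕ → A, Function.Bijective φ ∧ φ 0 = z ∧
      ∀ n : ℕ, φ (n + 1) = S (φ n)) ∨
    (Finite A ∧ ∃ m : ℕ, 0 < m ∧
      (∀ i j : ℕ, i < m → j < m → S^[i] z = S^[j] z → i = j) ∧
      (∀ a : A, ∃ k : ℕ, k < m ∧ S^[k] z = a) ∧
      (∃ j : ℕ, j < m ∧ S^[m] z = S^[j] z)) := by
  -- surjectivity of k ↦ S^[k] z
  have hsurj : ∀ a : A, ∃ k : ℕ, S^[k] z = a := by
    intro a
    have h := hind (Set.range (fun k : ℕ => S^[k] z)) ⟨0, rfl⟩ ?_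
    · have : a ∈ Set.range (fun k : ℕ => S^[k] z) := h ▸ Set.mem_univ a
      exact this
    · rintro y ⟨k, rfl⟩
      exact ⟨k + 1, Function.iterate_succ_apply' S k z⟩
  by_cases hinj : Function.Injective (fun k : ℕ => S^[k] z)
  · left
    have hbij : Function.Bijective (fun k : ℕ => S^[k] z) :=
      ⟨hinj, fun a => hsurj a⟩
    refine ⟨Infinite.of_injective (fun k : ℕ => S^[k] z) hbij.1,
      fun k => S^[k] z, hbij, rfl, ?_⟩
    intro n
    exact Function.iterate_succ_apply' S n z
  · right
    simp only [Function.not_injective_iff] at hinj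
    obtain ⟨i, j, hij, hne⟩ := hinj
    have hex : ∃ n : ℕ, ∃ j' < n, S^[n] z = S^[j'] z := by
      rcases lt_or_gt_of_ne hne with h | h
      · exact ⟨j, i, h, hij.symm⟩
      · exact ⟨i, j, h, hij⟩
    classical
    obtain ⟨j0, hj0m, hj0⟩ := Nat.find_spec hex
    have hmpos : 0 < Nat.find hex := Nat.lt_of_le_of_lt (Nat.zero_le j0) hj0m
    have hinjm : ∀ i j : ℕ, i < Nat.find hex → j < Nat.find hex →
        S^[i] z = S^[j] z → i = j := by
      intro a b ha hb hab
      by_contra hne'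
      rcases lt_or_gt_of_ne hne' with h | h
      · exact absurd ⟨a, h, hab.symm⟩ (Nat.find_min hex hb)
      · exact absurd ⟨b, h, hab⟩ (Nat.find_min hex ha)
    have hred : ∀ k : ℕ, ∃ k' < Nat.find hex, S^[k'] z = S^[k] z := by
      intro k
      induction k using Nat.strong_induction_on with
      | _ k ih =>
        by_cases hk : k < Nat.find hex
        · exact ⟨k, hk, rfl⟩
        · push_neg at hk
          have hkey : S^[k] z = S^[k - Nat.find hex + j0] z := by
            calc S^[k] z = S^[(k - Nat.find hex) + Nat.find hex] z := by
                  congr 1; omega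
              _ = S^[k - Nat.find hex] (S^[Nat.find hex] z) :=
                  Function.iterate_add_apply S _ _ z
              _ = S^[k - Nat.find hex] (S^[j0] z) := by rw [hj0]
              _ = S^[k - Nat.find hex + j0] z :=
                  (Function.iterate_add_apply S _ _ z).symm
          obtain ⟨k', hk', hk'eq⟩ := ih (k - Nat.find hex + j0) (by omega)
          exact ⟨k', hk', hk'eq.trans hkey.symm⟩
    have hsurjm : ∀ a : A, ∃ k : ℕ, k < Nat.find hex ∧ S^[k] z = a := by
      intro a
      obtain ⟨k, hk⟩ := hsurj a
      obtain ⟨k', hk', hk'eq⟩ := hred k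
      exact ⟨k', hk', hk'eq.trans hk⟩
    have hfin : Finite A := by
      refine Finite.of_surjective (fun i : Fin (Nat.find hex) => S^[(i : ℕ)] z) ?_
      intro a
      obtain ⟨k, hk, hkeq⟩ := hsurjm a
      exact ⟨⟨k, hk⟩, hkeq⟩
    exact ⟨hfin, Nat.find hex, hmpos, hinjm, hsurjm, j0, hj0m, hj0⟩
end

section
/- If an induction model (A, 0, S) is finite with cardinality m, then the elements 0, S(0), …, S^{m-1}(0) are pairwise distinct and exhaust A. -/
theorem finite_induction_model_enumeration {A : Type*} [Fintype A]
    (z : A) (S : A → A) (m : ℕ) (hm : Fintype.card A = m)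
    (hind : ∀ G : Set A, z ∈ G → (∀ y ∈ G, S y ∈ G) → G = Set.univ) :
    (∀ i j : ℕ, i < m → j < m → S^[i] z = S^[j] z → i = j) ∧
    (∀ a : A, ∃ k : ℕ, k < m ∧ S^[k] z = a) := by
  classical
  set f : ℕ → A := fun k => S^[k] z with hf
  -- surjectivity of f
  have hsurj : ∀ a : A, ∃ k : ℕ, f k = a := by
    have h := hind (Set.range f) ⟨0, rfl⟩ ?_
    · intro a
      have : a ∈ Set.range f := h ▸ Set.mem_univ a
      exact this
    · rintro y ⟨k, rfl⟩
      exact ⟨k + 1, by simp [hf, Function.iterate_succ_apply']⟩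
  -- injectivity on [0, m)
  have hinj : ∀ i j : ℕ, i < m → j < m → f i = f j → i = j := by
    have key : ∀ i j : ℕ, i < j → j < m → f i ≠ f j := by
      intro i j hij hjm heq
      -- every value is attained below j
      have hper : ∀ k : ℕ, ∃ n < j, f n = f k := by
        intro k
        induction k using Nat.strong_induction_on with
        | _ k ih =>
          by_cases hk : k < j
          · exact ⟨k, hk, rfl⟩
          · push_neg at hk
            have h1 : f k = f (k - j + i) := by
              have : f k = S^[k - j] (f j) := by
                simp [hf, ← Function.iterate_add_apply]
                congr 1
                omega
              rw [this, ← heq]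
              simp [hf, ← Function.iterate_add_apply]
            have hlt : k - j + i < k := by omega
            obtain ⟨n, hn, hfn⟩ := ih (k - j + i) hlt
            exact ⟨n, hn, by rw [hfn, h1]⟩
      -- so the image of range j is everything
      have himg : (Finset.range j).image f = Finset.univ := by
        apply Finset.eq_univ_of_forall
        intro a
        obtain ⟨k, hk⟩ := hsurj a
        obtain ⟨n, hn, hfn⟩ := hper k
        exact Finset.mem_image.2 ⟨n, Finset.mem_range.2 hn, by rw [hfn, hk]⟩
      have : m ≤ j := by
        calc m = Fintype.card A := hm.symm
        _ = Finset.univ.card := rfl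
        _ = ((Finset.range j).image f).card := by rw [himg]
        _ ≤ (Finset.range j).card := Finset.card_image_le
        _ = j := Finset.card_range j
      omega
    intro i j him hjm heq
    rcases lt_trichotomy i j with h | h | h
    · exact absurd heq (key i j h hjm)
    · exact h
    · exact absurd heq.symm (key j i h him)
  refine ⟨hinj, ?_⟩
  -- image of range m is all of A by cardinality
  have hcard : ((Finset.range m).image f).card = m := by
    rw [Finset.card_image_of_injOn, Finset.card_range]
    intro a ha b hb hab
    exact hinj a b (Finset.mem_range.1 ha) (Finset.mem_range.1 hb) hab
  have huniv : (Finset.range m).image f = Finset.univ := by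
    apply Finset.eq_univ_of_card
    rw [hcard, hm]
  intro a
  have : a ∈ (Finset.range m).image f := huniv ▸ Finset.mem_univ a
  obtain ⟨k, hk, hfk⟩ := Finset.mem_image.1 this
  exact ⟨k, Finset.mem_range.1 hk, hfk⟩
end

section
/- In every induction model (A, 0, S) there exists a binary operation + on A satisfying x + 0 = x and x + S y = S(x + y) for all x, y ∈ A, and this operation is unique. -/
theorem induction_model_addition_exists_unique {A : Type*} (z : A) (S : A → A)
    (hind : ∀ G : Set A, z ∈ G → (∀ y ∈ G, S y ∈ G) → G = Set.univ) :
    ∃! add : A → A → A, (∀ x : A, add x z = x) ∧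
      ∀ x y : A, add x (S y) = S (add x y) := by
  classical
  -- every element is an iterate of S on z
  have surj : ∀ a : A, ∃ k : ℕ, S^[k] z = a := by
    intro a
    have h := hind {a | ∃ k : ℕ, S^[k] z = a} ⟨0, rfl⟩ ?_
    · have : a ∈ (Set.univ : Set A) := Set.mem_univ a
      rw [← h] at this; exact this
    · rintro y ⟨k, hk⟩
      exact ⟨k + 1, by rw [Function.iterate_succ_apply', hk]⟩
  -- well-definedness key lemma
  have key : ∀ (k m : ℕ) (x : A), S^[k] z = S^[m] z → S^[k] x = S^[m] x := by
    intro k m x h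
    obtain ⟨j, hj⟩ := surj x
    subst hj
    calc S^[k] (S^[j] z) = S^[j] (S^[k] z) := by
          rw [← Function.iterate_add_apply, Nat.add_comm, Function.iterate_add_apply]
      _ = S^[j] (S^[m] z) := by rw [h]
      _ = S^[m] (S^[j] z) := by
          rw [← Function.iterate_add_apply, Nat.add_comm, Function.iterate_add_apply]
  refine ⟨fun x y => S^[(surj y).choose] x, ⟨?_, ?_⟩, ?_⟩
  · intro x
    have hz : S^[(surj z).choose] z = S^[0] z := (surj z).choose_spec
    exact key _ 0 x hz
  · intro x y
    have hy : S^[(surj y).choose] z = y := (surj y).choose_spec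
    have hSy : S^[(surj (S y)).choose] z = S^[(surj y).choose + 1] z := by
      rw [Function.iterate_succ_apply', hy]
      exact (surj (S y)).choose_spec
    show S^[(surj (S y)).choose] x = S (S^[(surj y).choose] x)
    rw [key _ _ x hSy, Function.iterate_succ_apply']
  · rintro add2 ⟨h0, hS⟩
    funext x y
    have h := hind {y | add2 x y = S^[(surj y).choose] x} ?_ ?_
    · have : y ∈ (Set.univ : Set A) := Set.mem_univ y
      rw [← h] at this
      exact this
    · show add2 x z = _
      rw [h0]
      have hz : S^[(surj z).choose] z = S^[0] z := (surj z).choose_spec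
      exact (key _ 0 x hz).symm
    · intro y hy
      show add2 x (S y) = _
      rw [hS, hy]
      have hy' : S^[(surj y).choose] z = y := (surj y).choose_spec
      have hSy : S^[(surj (S y)).choose] z = S^[(surj y).choose + 1] z := by
        rw [Function.iterate_succ_apply', hy']
        exact (surj (S y)).choose_spec
      rw [key _ _ x hSy, Function.iterate_succ_apply']
end

section
/- There exists an induction model (A, 0, S) together with operations + and · satisfying the recursion equations for addition and multiplication, in which no binary operation E : A × A → A satisfies the exponentiation recursion equations E(x, 0) = S(0) and E(x, S y) = E(x, y) · x for all x, y ∈ A. Concretely, ZMod 4 with S(x) = x+1 and the usual + and · is such a model. -/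
theorem ZMod.set_eq_univ_of_zero_mem_of_add_one_mem {n : ℕ} [NeZero n] {G : Set (ZMod n)}
    (h0 : 0 ∈ G) (hS : ∀ y ∈ G, y + 1 ∈ G) : G = Set.univ := by
  have natCast_mem (k : ℕ) : (k : ZMod n) ∈ G := by
    induction k with
    | zero => simpa using h0
    | succ k ih => simpa using hS _ ih
  refine Set.eq_univ_of_forall fun x => ?_
  simpa using natCast_mem x.val

section Exponentiation

variable {R : Type*} [Semiring R]

def IsExponentiation (E : R × R → R) : Prop :=
  (∀ x, E (x, 0) = 1) ∧ ∀ x y, E (x, y + 1) = E (x, y) * x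

theorem IsExponentiation.apply_natCast {E : R × R → R} (hE : IsExponentiation E) (x : R)
    (k : ℕ) : E (x, k) = x ^ k := by
  induction k with
  | zero => simpa using hE.1 x
  | succ k ih => rw [Nat.cast_succ, hE.2, ih, pow_succ]

/-- In positive characteristic `n` the exponent `n` is `0`, so `0 ^ n` would have to be `1`. -/
theorem not_exists_isExponentiation_of_charP [Nontrivial R] (n : ℕ) [CharP R n] (hn : n ≠ 0) :
    ¬ ∃ E : R × R → R, IsExponentiation E := by
  rintro ⟨E, hE⟩
  have h := hE.apply_natCast 0 n
  rw [CharP.cast_eq_zero, hE.1, zero_pow hn] at h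
  exact one_ne_zero h

end Exponentiation

theorem zmod4_no_exponentiation :
    (∀ G : Set (ZMod 4), (0 : ZMod 4) ∈ G → (∀ y ∈ G, y + 1 ∈ G) → G = Set.univ) ∧
    (∀ x : ZMod 4, x + 0 = x) ∧
    (∀ x y : ZMod 4, x + (y + 1) = (x + y) + 1) ∧
    (∀ x : ZMod 4, x * 0 = 0) ∧
    (∀ x y : ZMod 4, x * (y + 1) = x * y + x) ∧
    ¬ ∃ E : ZMod 4 × ZMod 4 → ZMod 4,
        (∀ x : ZMod 4, E (x, 0) = (0 : ZMod 4) + 1) ∧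
        ∀ x y : ZMod 4, E (x, y + 1) = E (x, y) * x := by
  refine ⟨fun _ h0 hS => ZMod.set_eq_univ_of_zero_mem_of_add_one_mem h0 hS, add_zero,
    fun x y => (add_assoc x y 1).symm, mul_zero, mul_add_one, ?_⟩
  have : Fact (1 < 4) := ⟨by norm_num⟩
  simp only [zero_add]
  exact not_exists_isExponentiation_of_charP (R := ZMod 4) 4 four_ne_zero
end

section
/- If (A, 0, S) is an induction model and S is not injective, then A is finite. -/
theorem induction_model_noninjective_finite {A : Type*} (z : A) (S : A → A)
    (hind : ∀ G : Set A, z ∈ G → (∀ y ∈ G, S y ∈ G) → G = Set.univ)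
    (hnotinj : ¬ Function.Injective S) : Finite A := by
  -- every element is an iterate of z
  have hsurj : ∀ a : A, ∃ k : ℕ, S^[k] z = a := by
    intro a
    have h := hind (Set.range (fun n : ℕ => S^[n] z)) ⟨0, rfl⟩ ?_
    · have : a ∈ Set.range (fun n : ℕ => S^[n] z) := h ▸ Set.mem_univ a
      exact this
    · rintro y ⟨n, rfl⟩
      exact ⟨n + 1, Function.iterate_succ_apply' S n z⟩
  obtain ⟨a, b, hab, hne⟩ := Function.not_injective_iff.mp hnotinj
  obtain ⟨m, rfl⟩ := hsurj a
  obtain ⟨n, rfl⟩ := hsurj b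
  have hmn : m ≠ n := fun h => hne (h ▸ rfl)
  -- WLOG m < n
  wlog hlt : m < n generalizing m n
  · exact this n m hab.symm hne.symm hmn.symm (by omega)
  have hper : S^[m + 1] z = S^[n + 1] z := by
    rw [Function.iterate_succ_apply', Function.iterate_succ_apply', hab]
  -- everything equals S^[j] z with j ≤ n
  have key : ∀ k : ℕ, ∃ j ≤ n, S^[j] z = S^[k] z := by
    intro k
    induction k using Nat.strong_induction_on with
    | _ k ih =>
      by_cases hk : k ≤ n
      · exact ⟨k, hk, rfl⟩
      · have hk' : k = (k - (n + 1)) + (n + 1) := by omega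
        have : S^[k] z = S^[(k - (n + 1)) + (m + 1)] z := by
          conv_lhs => rw [hk']
          rw [Function.iterate_add_apply, ← hper, ← Function.iterate_add_apply]
        obtain ⟨j, hj, hje⟩ := ih ((k - (n + 1)) + (m + 1)) (by omega)
        exact ⟨j, hj, hje.trans this.symm⟩
  have : Function.Surjective (fun i : Fin (n + 1) => S^[i] z) := by
    intro a
    obtain ⟨k, rfl⟩ := hsurj a
    obtain ⟨j, hj, hje⟩ := key k
    exact ⟨⟨j, by omega⟩, hje⟩
  exact Finite.of_surjective _ this
end
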